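/- Let A be an m × n complex matrix and P an m × m permutation matrix. Let U be an m × k complex matrix with orthonormal columns (U*U = I_k), C an invertible k × k matrix, L₁ = U·C, let Ω₂ be a q × m complex matrix, W a k × q matrix with W·(Ω₂·U) = I_k, and set M = C⁻¹·W. Suppose there exists a k × m matrix N and a constant E ≥ 0 such that ‖P·A − L₁·N·(P·A)‖_F ≤ E. Then ‖L₁·M·Ω₂·(P·A) − P·A‖_F ≤ (‖W‖₂·‖Ω₂‖₂ + 1)·E. -/

import Mathlib

/-!
Put `Q = U W Ω₂`. Since `W Ω₂ U = 1`, `Q` fixes the columns of `L₁ = U C`, and `L₁ M Ω₂ = Q`.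
Hence, with `R = P A - L₁ N (P A)`, the error `Q (P A) - P A` equals `Q R - R`, whose Frobenius
norm is at most `‖U‖₂ ‖W‖₂ ‖Ω₂‖₂ ‖R‖_F + ‖R‖_F`; finally `‖U‖₂ ≤ 1` because `U*U = I`.
The bound `‖X Y‖_F ≤ ‖X‖₂ ‖Y‖_F` is applied column by column.
-/

open Matrix

/-- The Frobenius norm of a complex matrix. -/
noncomputable def frobNorm {m n : ℕ} (A : Matrix (Fin m) (Fin n) ℂ) : ℝ :=
  Real.sqrt (∑ i, ∑ j, ‖A i j‖ ^ 2)

/-- The spectral (operator) norm of a complex matrix, viewed as a linear map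
between Euclidean spaces. -/
noncomputable def opNorm {m n : ℕ} (A : Matrix (Fin m) (Fin n) ℂ) : ℝ :=
  ‖LinearMap.toContinuousLinearMap (Matrix.toEuclideanLin A)‖

lemma mul_sub_self_eq_of_mul_eq {R : Type*} [Ring R] {m k n : Type*} [Fintype m] [Fintype k]
    {Q : Matrix m m R} {L : Matrix m k R} (hQL : Q * L = L) (B : Matrix m n R)
    (X : Matrix k n R) : Q * B - B = Q * (B - L * X) - (B - L * X) := by
  rw [Matrix.mul_sub, ← Matrix.mul_assoc, hQL]
  abel

section OpNorm

open scoped Matrix.Norms.L2Operator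

variable {a b : ℕ}

lemma opNorm_nonneg (A : Matrix (Fin a) (Fin b) ℂ) : 0 ≤ opNorm A := norm_nonneg _

lemma opNorm_le_one_of_conjTranspose_mul_self {U : Matrix (Fin a) (Fin b) ℂ}
    (hU : Uᴴ * U = 1) : opNorm U ≤ 1 := by
  change ‖U‖ ≤ 1
  have hone : ‖(1 : Matrix (Fin b) (Fin b) ℂ)‖ ≤ 1 := by
    rw [← diagonal_one, l2_opNorm_diagonal]
    exact pi_norm_le_iff_of_nonneg zero_le_one |>.mpr fun _ => by simp
  have hsq : ‖U‖ * ‖U‖ ≤ 1 := by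
    rwa [← l2_opNorm_conjTranspose_mul_self, hU]
  nlinarith [norm_nonneg U]

lemma norm_toLp_mulVec_le (A : Matrix (Fin a) (Fin b) ℂ) (v : Fin b → ℂ) :
    ‖WithLp.toLp 2 (A *ᵥ v)‖ ≤ opNorm A * ‖WithLp.toLp 2 v‖ :=
  l2_opNorm_mulVec A (WithLp.toLp 2 v)

end OpNorm

section Frobenius

attribute [local instance] Matrix.frobeniusNormedAddCommGroup

lemma frobNorm_eq_frobenius_norm {a b : ℕ} (A : Matrix (Fin a) (Fin b) ℂ) :
    frobNorm A = ‖A‖ := by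
  rw [frobenius_norm_def, frobNorm, Real.sqrt_eq_rpow]
  norm_num [Real.rpow_two]

lemma frobNorm_sub_le {a b : ℕ} (A B : Matrix (Fin a) (Fin b) ℂ) :
    frobNorm (A - B) ≤ frobNorm A + frobNorm B := by
  simp only [frobNorm_eq_frobenius_norm]
  exact norm_sub_le A B

end Frobenius

section FrobNorm

variable {a b c d : ℕ}

lemma frobNorm_nonneg (A : Matrix (Fin a) (Fin b) ℂ) : 0 ≤ frobNorm A :=
  Real.sqrt_nonneg _

lemma frobNorm_sq_eq_sum_norm_col (A : Matrix (Fin a) (Fin b) ℂ) :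
    frobNorm A ^ 2 = ∑ j, ‖WithLp.toLp 2 (Aᵀ j)‖ ^ 2 := by
  rw [frobNorm, Real.sq_sqrt (by positivity), Finset.sum_comm]
  simp [EuclideanSpace.norm_sq_eq]

lemma frobNorm_mul_le (X : Matrix (Fin a) (Fin b) ℂ) (Y : Matrix (Fin b) (Fin c) ℂ) :
    frobNorm (X * Y) ≤ opNorm X * frobNorm Y := by
  have hcol (j : Fin c) : (X * Y)ᵀ j = X *ᵥ Yᵀ j := rfl
  refine le_of_pow_le_pow_left₀ two_ne_zero
    (mul_nonneg (opNorm_nonneg X) (frobNorm_nonneg Y)) ?_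
  calc frobNorm (X * Y) ^ 2 = ∑ j, ‖WithLp.toLp 2 (X *ᵥ Yᵀ j)‖ ^ 2 := by
        simp only [frobNorm_sq_eq_sum_norm_col, hcol]
    _ ≤ ∑ j, (opNorm X * ‖WithLp.toLp 2 (Yᵀ j)‖) ^ 2 := by
        gcongr with j
        exact norm_toLp_mulVec_le X _
    _ = (opNorm X * frobNorm Y) ^ 2 := by
        simp only [mul_pow, frobNorm_sq_eq_sum_norm_col, Finset.mul_sum]

lemma frobNorm_mul_le_of_conjTranspose_mul_self {U : Matrix (Fin a) (Fin b) ℂ}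
    (hU : Uᴴ * U = 1) (X : Matrix (Fin b) (Fin c) ℂ) : frobNorm (U * X) ≤ frobNorm X :=
  (frobNorm_mul_le U X).trans <|
    mul_le_of_le_one_left (frobNorm_nonneg X) (opNorm_le_one_of_conjTranspose_mul_self hU)

lemma frobNorm_mul_mul_mul_sub_le_of_conjTranspose_mul_self {U : Matrix (Fin a) (Fin b) ℂ}
    (hU : Uᴴ * U = 1) (W : Matrix (Fin b) (Fin c) ℂ) (Ω : Matrix (Fin c) (Fin a) ℂ)
    (R : Matrix (Fin a) (Fin d) ℂ) :
    frobNorm (U * W * Ω * R - R) ≤ (opNorm W * opNorm Ω + 1) * frobNorm R := by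
  have hQR : frobNorm (U * W * Ω * R) ≤ opNorm W * (opNorm Ω * frobNorm R) := by
    simp only [Matrix.mul_assoc]
    calc frobNorm (U * (W * (Ω * R))) ≤ frobNorm (W * (Ω * R)) :=
          frobNorm_mul_le_of_conjTranspose_mul_self hU _
      _ ≤ opNorm W * (opNorm Ω * frobNorm R) :=
          (frobNorm_mul_le W _).trans <|
            mul_le_mul_of_nonneg_left (frobNorm_mul_le Ω R) (opNorm_nonneg W)
  linarith [frobNorm_sub_le (U * W * Ω * R) R]

end FrobNorm

theorem oblique_projection_error_bound_general {m n k q : ℕ}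
    (A : Matrix (Fin m) (Fin n) ℂ) (P : Matrix (Fin m) (Fin m) ℂ)
    (U : Matrix (Fin m) (Fin k) ℂ) (hU : Uᴴ * U = 1)
    (C : Matrix (Fin k) (Fin k) ℂ) (hC : IsUnit C)
    (L₁ : Matrix (Fin m) (Fin k) ℂ) (hL : L₁ = U * C)
    (Ω₂ : Matrix (Fin q) (Fin m) ℂ)
    (W : Matrix (Fin k) (Fin q) ℂ) (hW : W * (Ω₂ * U) = 1)
    (M : Matrix (Fin k) (Fin q) ℂ) (hM : M = C⁻¹ * W)
    (N : Matrix (Fin k) (Fin m) ℂ) (E : ℝ)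
    (hN : frobNorm (P * A - L₁ * N * (P * A)) ≤ E) :
    frobNorm (L₁ * M * Ω₂ * (P * A) - P * A) ≤ (opNorm W * opNorm Ω₂ + 1) * E := by
  have hLM : L₁ * M * Ω₂ = U * W * Ω₂ := by
    rw [hL, hM, Matrix.mul_assoc U,
      mul_nonsing_inv_cancel_left _ _ ((isUnit_iff_isUnit_det C).mp hC)]
  have hproj : U * W * Ω₂ * L₁ = L₁ := by
    rw [hL, Matrix.mul_assoc (U * W), ← Matrix.mul_assoc Ω₂, Matrix.mul_assoc U,
      ← Matrix.mul_assoc W, hW, Matrix.one_mul]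
  have hcoef : 0 ≤ opNorm W * opNorm Ω₂ + 1 := by
    have := opNorm_nonneg W; have := opNorm_nonneg Ω₂; positivity
  rw [hLM, mul_sub_self_eq_of_mul_eq hproj (P * A) (N * (P * A)), ← Matrix.mul_assoc L₁]
  exact (frobNorm_mul_mul_mul_sub_le_of_conjTranspose_mul_self hU W Ω₂ _).trans
    (mul_le_mul_of_nonneg_left hN hcoef)

theorem oblique_projection_error_bound {m n k q : ℕ}
    (A : Matrix (Fin m) (Fin n) ℂ) (P : Matrix (Fin m) (Fin m) ℂ)
    (hP : ∃ σ : Equiv.Perm (Fin m), ∀ i j, P i j = if σ i = j then 1 else 0)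
    (U : Matrix (Fin m) (Fin k) ℂ) (hU : Uᴴ * U = 1)
    (C : Matrix (Fin k) (Fin k) ℂ) (hC : IsUnit C)
    (L₁ : Matrix (Fin m) (Fin k) ℂ) (hL : L₁ = U * C)
    (Ω₂ : Matrix (Fin q) (Fin m) ℂ)
    (W : Matrix (Fin k) (Fin q) ℂ) (hW : W * (Ω₂ * U) = 1)
    (M : Matrix (Fin k) (Fin q) ℂ) (hM : M = C⁻¹ * W)
    (N : Matrix (Fin k) (Fin m) ℂ) (E : ℝ) (hE : 0 ≤ E)
    (hN : frobNorm (P * A - L₁ * N * (P * A)) ≤ E) :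
    frobNorm (L₁ * M * Ω₂ * (P * A) - P * A) ≤ (opNorm W * opNorm Ω₂ + 1) * E :=
  oblique_projection_error_bound_general A P U hU C hC L₁ hL Ω₂ W hW M hM N E hN
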